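/- Let f be a real-valued function on real m×n matrices that is differentiable with gradient ∇f with respect to the Frobenius inner product, L-smooth (f(B) ≤ f(A) + ⟨∇f(A), B − A⟩ + (L/2)‖B − A‖_F² for all A, B), and bounded below by f_inf. Let η > 0, and let the iterates satisfy W_{t+1} = E₂(−η G_t^out) · W_t · E₂(−η G_t^in), where E₂(X) = I + X + (1/2)X², G_t = ∇f(W_t), G_t^in = W_tᵀG_t − G_tᵀW_t, G_t^out = G_tW_tᵀ − W_tG_tᵀ. Assume there are constants γ, Ĝ, B with ‖W_t‖₂ ≤ γ, ‖G_t‖_F ≤ Ĝ, ‖G_t^in‖_F ≤ B, ‖G_t^out‖_F ≤ B for all t, and that c = η/2 − Ĝ·K − 2Lη²γ² − 2L·K²·B² > 0, where K = γ(η² + (B/2)η³ + (B²/8)η⁴). Then for every T ≥ 1, min over 0 ≤ t < T of (‖G_t^in‖_F² + ‖G_t^out‖_F²) is at most (f(W_0) − f_inf) / (c · T). -/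

import Mathlib

open Matrix

/-- The Frobenius norm of a real matrix: `‖A‖_F = sqrt (trace (Aᵀ * A))`. -/
noncomputable def frobNorm {m n : ℕ} (A : Matrix (Fin m) (Fin n) ℝ) : ℝ :=
  Real.sqrt (Matrix.trace (Aᵀ * A))

/-- The spectral norm of a real matrix: the operator norm of the induced linear map
between Euclidean spaces. -/
noncomputable def specNorm {m n : ℕ} (A : Matrix (Fin m) (Fin n) ℝ) : ℝ :=
  ‖(LinearMap.toContinuousLinearMap (Matrix.toEuclideanLin A) :
      EuclideanSpace ℝ (Fin n) →L[ℝ] EuclideanSpace ℝ (Fin m))‖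

/-- Second-order truncation of the matrix exponential: `E₂(X) = I + X + (1/2) X²`. -/
noncomputable def expTrunc2 {k : ℕ} (X : Matrix (Fin k) (Fin k) ℝ) :
    Matrix (Fin k) (Fin k) ℝ :=
  1 + X + (1 / 2 : ℝ) • (X * X)

section Aux
variable {m n p q : ℕ}
variable {m n p q : ℕ}

private lemma sq_le_imp {a b : ℝ} (hb : 0 ≤ b) (h : a ^ 2 ≤ b ^ 2) (ha : 0 ≤ a) : a ≤ b := by
  nlinarith

lemma trace_tm (A B : Matrix (Fin m) (Fin n) ℝ) :
    Matrix.trace (Aᵀ * B) = ∑ i, ∑ j, A i j * B i j := by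
  rw [Finset.sum_comm]
  simp [Matrix.trace, Matrix.mul_apply, Matrix.diag]

lemma frobNorm_eq (A : Matrix (Fin m) (Fin n) ℝ) :
    frobNorm A = Real.sqrt (∑ i, ∑ j, (A i j)^2) := by
  rw [frobNorm, trace_tm]; congr 1; simp [sq]

lemma frobNorm_nonneg (A : Matrix (Fin m) (Fin n) ℝ) : 0 ≤ frobNorm A := Real.sqrt_nonneg _

lemma frobNorm_sq (A : Matrix (Fin m) (Fin n) ℝ) :
    frobNorm A ^ 2 = ∑ i, ∑ j, (A i j)^2 := by
  rw [frobNorm_eq, Real.sq_sqrt]; positivity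

lemma frobNorm_transpose (A : Matrix (Fin m) (Fin n) ℝ) : frobNorm Aᵀ = frobNorm A := by
  rw [frobNorm_eq, frobNorm_eq, Finset.sum_comm]; rfl

lemma frobNorm_smul (c : ℝ) (A : Matrix (Fin m) (Fin n) ℝ) :
    frobNorm (c • A) = |c| * frobNorm A := by
  rw [frobNorm_eq, frobNorm_eq]
  have : ∀ i j, ((c • A) i j)^2 = c^2 * (A i j)^2 := by intro i j; simp [mul_pow]
  simp_rw [this, ← Finset.mul_sum]
  rw [Real.sqrt_mul (sq_nonneg c), Real.sqrt_sq_eq_abs]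

lemma frobNorm_neg (A : Matrix (Fin m) (Fin n) ℝ) : frobNorm (-A) = frobNorm A := by
  rw [frobNorm_eq, frobNorm_eq]; simp

lemma trace_le_frob_mul_frob (A B : Matrix (Fin m) (Fin n) ℝ) :
    Matrix.trace (Aᵀ * B) ≤ frobNorm A * frobNorm B := by
  rw [trace_tm]
  have h := Finset.sum_mul_sq_le_sq_mul_sq Finset.univ
      (fun ij : Fin m × Fin n => A ij.1 ij.2) (fun ij : Fin m × Fin n => B ij.1 ij.2)
  rw [show (∑ i, ∑ j, A i j * B i j) = ∑ ij : Fin m × Fin n, A ij.1 ij.2 * B ij.1 ij.2 by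
    rw [Fintype.sum_prod_type]]
  calc ∑ ij : Fin m × Fin n, A ij.1 ij.2 * B ij.1 ij.2
      ≤ |∑ ij : Fin m × Fin n, A ij.1 ij.2 * B ij.1 ij.2| := le_abs_self _
    _ ≤ frobNorm A * frobNorm B := by
        rw [← Real.sqrt_sq_eq_abs, frobNorm_eq, frobNorm_eq, ← Real.sqrt_mul (by positivity)]
        apply Real.sqrt_le_sqrt
        simpa [Fintype.sum_prod_type] using h

lemma trace_tm_add_left (A B C : Matrix (Fin m) (Fin n) ℝ) :
    Matrix.trace ((A + B)ᵀ * C) = Matrix.trace (Aᵀ * C) + Matrix.trace (Bᵀ * C) := by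
  rw [Matrix.transpose_add, Matrix.add_mul, Matrix.trace_add]

lemma trace_tm_add_right (A B C : Matrix (Fin m) (Fin n) ℝ) :
    Matrix.trace (Aᵀ * (B + C)) = Matrix.trace (Aᵀ * B) + Matrix.trace (Aᵀ * C) := by
  rw [Matrix.mul_add, Matrix.trace_add]

lemma frobNorm_add_le (A B : Matrix (Fin m) (Fin n) ℝ) :
    frobNorm (A + B) ≤ frobNorm A + frobNorm B := by
  apply sq_le_imp (add_nonneg (frobNorm_nonneg _) (frobNorm_nonneg _)) _ (frobNorm_nonneg _)
  have h1 : frobNorm (A + B) ^ 2 = frobNorm A ^ 2 + 2 * Matrix.trace (Aᵀ * B) + frobNorm B ^ 2 := by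
    simp only [frobNorm_sq, trace_tm]
    have he : ∀ i j, ((A + B) i j)^2 = A i j ^ 2 + 2 * (A i j * B i j) + B i j ^ 2 := by
      intro i j; simp [Matrix.add_apply]; ring
    simp_rw [he, Finset.sum_add_distrib, Finset.mul_sum]
  have h2 := trace_le_frob_mul_frob A B
  nlinarith [frobNorm_nonneg A, frobNorm_nonneg B]

lemma frobNorm_mul_le (A : Matrix (Fin m) (Fin p) ℝ) (B : Matrix (Fin p) (Fin n) ℝ) :
    frobNorm (A * B) ≤ frobNorm A * frobNorm B := by
  apply sq_le_imp (mul_nonneg (frobNorm_nonneg _) (frobNorm_nonneg _)) _ (frobNorm_nonneg _)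
  rw [mul_pow]
  simp only [frobNorm_sq, Matrix.mul_apply]
  calc ∑ i, ∑ j, (∑ k, A i k * B k j)^2
      ≤ ∑ i, ∑ j, (∑ k, (A i k)^2) * (∑ k, (B k j)^2) := by
        apply Finset.sum_le_sum; intro i _; apply Finset.sum_le_sum; intro j _
        exact Finset.sum_mul_sq_le_sq_mul_sq _ _ _
    _ = (∑ i, ∑ k, (A i k)^2) * (∑ k, ∑ j, (B k j)^2) := by
        rw [Finset.sum_mul]
        apply Finset.sum_congr rfl; intro i _
        rw [← Finset.mul_sum, Finset.sum_comm]

variable {m n p q : ℕ}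

section Spec
open scoped Matrix.Norms.L2Operator

lemma specNorm_eq (A : Matrix (Fin m) (Fin n) ℝ) : specNorm A = ‖A‖ := rfl

lemma specNorm_nonneg (A : Matrix (Fin m) (Fin n) ℝ) : 0 ≤ specNorm A := norm_nonneg _

lemma specNorm_mul_le (A : Matrix (Fin m) (Fin p) ℝ) (B : Matrix (Fin p) (Fin n) ℝ) :
    specNorm (A * B) ≤ specNorm A * specNorm B := by
  simp only [specNorm_eq]; exact Matrix.l2_opNorm_mul A B

lemma specNorm_transpose (A : Matrix (Fin m) (Fin n) ℝ) : specNorm Aᵀ = specNorm A := by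
  have h : Aᵀ = Aᴴ := by ext i j; simp [Matrix.conjTranspose_apply]
  rw [h, specNorm_eq, specNorm_eq]
  exact Matrix.l2_opNorm_conjTranspose A

-- column bound: ∑ over i of (A *ᵥ v) i ^ 2 ≤ specNorm A ^ 2 * ∑ v j ^ 2
lemma mulVec_sq_le (A : Matrix (Fin m) (Fin n) ℝ) (v : Fin n → ℝ) :
    ∑ i, (A.mulVec v i)^2 ≤ specNorm A ^ 2 * ∑ j, (v j)^2 := by
  have h := Matrix.l2_opNorm_mulVec A ((WithLp.equiv 2 (Fin n → ℝ)).symm v)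
  rw [EuclideanSpace.norm_eq, EuclideanSpace.norm_eq] at h
  have h2 : Real.sqrt (∑ i, ((A.mulVec v) i)^2) ≤ specNorm A * Real.sqrt (∑ j, (v j)^2) := by
    simpa [Real.norm_eq_abs, sq_abs, specNorm_eq] using h
  have := sq_nonneg (specNorm A)
  calc ∑ i, (A.mulVec v i)^2 = Real.sqrt (∑ i, (A.mulVec v i)^2) ^ 2 := by
        rw [Real.sq_sqrt]; positivity
    _ ≤ (specNorm A * Real.sqrt (∑ j, (v j)^2))^2 := by
        apply pow_le_pow_left₀ (Real.sqrt_nonneg _) h2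
    _ = specNorm A ^2 * ∑ j, (v j)^2 := by
        rw [mul_pow, Real.sq_sqrt (by positivity)]
end Spec

lemma specNorm_le_frobNorm (A : Matrix (Fin m) (Fin n) ℝ) : specNorm A ≤ frobNorm A := by
  apply ContinuousLinearMap.opNorm_le_bound _ (frobNorm_nonneg A)
  intro x
  rw [show ((LinearMap.toContinuousLinearMap (Matrix.toEuclideanLin A) :
      EuclideanSpace ℝ (Fin n) →L[ℝ] EuclideanSpace ℝ (Fin m)) x)
      = (WithLp.equiv 2 (Fin m → ℝ)).symm (A.mulVec ((WithLp.equiv 2 (Fin n → ℝ)) x)) from rfl]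
  rw [EuclideanSpace.norm_eq, EuclideanSpace.norm_eq]
  simp only [Real.norm_eq_abs, sq_abs, WithLp.equiv_symm_apply, PiLp.toLp_apply]
  rw [frobNorm_eq, ← Real.sqrt_mul (by positivity)]
  apply Real.sqrt_le_sqrt
  rw [Finset.sum_mul]
  apply Finset.sum_le_sum
  intro i _
  calc (A.mulVec ((WithLp.equiv 2 (Fin n → ℝ)) x) i)^2
      = (∑ j, A i j * x j)^2 := by rfl
    _ ≤ (∑ j, (A i j)^2) * ∑ j, (x j)^2 := Finset.sum_mul_sq_le_sq_mul_sq _ _ _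
    _ = (∑ j, (A i j)^2) * ∑ j, ((WithLp.equiv 2 (Fin n → ℝ)) x j)^2 := rfl

lemma frob_mul_le_spec_frob (X : Matrix (Fin m) (Fin p) ℝ) (B : Matrix (Fin p) (Fin n) ℝ) :
    frobNorm (X * B) ≤ specNorm X * frobNorm B := by
  apply sq_le_imp (mul_nonneg (specNorm_nonneg _) (frobNorm_nonneg _)) _ (frobNorm_nonneg _)
  rw [mul_pow, frobNorm_sq, frobNorm_sq, Finset.sum_comm]
  calc ∑ j, ∑ i, ((X * B) i j)^2
      = ∑ j, ∑ i, (X.mulVec (fun k => B k j) i)^2 := by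
        apply Finset.sum_congr rfl; intro j _; apply Finset.sum_congr rfl; intro i _
        simp [Matrix.mul_apply, Matrix.mulVec, dotProduct]
    _ ≤ ∑ j, specNorm X ^ 2 * ∑ k, (B k j)^2 := by
        apply Finset.sum_le_sum; intro j _; exact mulVec_sq_le X _
    _ = specNorm X ^ 2 * ∑ k, ∑ j, (B k j)^2 := by
        rw [← Finset.mul_sum, Finset.sum_comm]

lemma frob_mul_le_frob_spec (A : Matrix (Fin m) (Fin p) ℝ) (X : Matrix (Fin p) (Fin n) ℝ) :
    frobNorm (A * X) ≤ frobNorm A * specNorm X := by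
  have h : frobNorm (A * X) = frobNorm (Xᵀ * Aᵀ) := by
    rw [← Matrix.transpose_mul, frobNorm_transpose]
  rw [h, mul_comm]
  calc frobNorm (Xᵀ * Aᵀ) ≤ specNorm Xᵀ * frobNorm Aᵀ := frob_mul_le_spec_frob _ _
    _ = specNorm X * frobNorm A := by rw [specNorm_transpose, frobNorm_transpose]

lemma frobNorm_sq_eq_trace (A : Matrix (Fin m) (Fin n) ℝ) :
    frobNorm A ^ 2 = Matrix.trace (Aᵀ * A) := by
  rw [frobNorm_sq, trace_tm]; simp [sq]

lemma skew_inner (M : Matrix (Fin p) (Fin p) ℝ) :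
    Matrix.trace (Mᵀ * (M - Mᵀ)) = (1/2) * frobNorm (M - Mᵀ)^2 := by
  have h1 : Matrix.trace (Mᵀ * Mᵀ) = Matrix.trace (M * M) := by
    rw [← Matrix.transpose_mul, Matrix.trace_transpose]
  have h2 : Matrix.trace (M * Mᵀ) = Matrix.trace (Mᵀ * M) := Matrix.trace_mul_comm _ _
  rw [frobNorm_sq_eq_trace]
  simp only [Matrix.transpose_sub, Matrix.transpose_transpose, Matrix.sub_mul,
    Matrix.mul_sub, Matrix.trace_sub]
  linarith

-- trace (Gᵀ * ((c • (M - Mᵀ)) * W)) where M = G * Wᵀ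
lemma trace_out_term (G Wt : Matrix (Fin m) (Fin n) ℝ) (η : ℝ) :
    Matrix.trace (Gᵀ * ((-(η • (G * Wtᵀ - Wt * Gᵀ))) * Wt))
      = -(η/2) * frobNorm (G * Wtᵀ - Wt * Gᵀ)^2 := by
  set M := G * Wtᵀ with hM
  have hskew : G * Wtᵀ - Wt * Gᵀ = M - Mᵀ := by
    rw [hM, Matrix.transpose_mul, Matrix.transpose_transpose]
  rw [hskew]
  have : Gᵀ * (-(η • (M - Mᵀ)) * Wt) = -(η • (Gᵀ * ((M - Mᵀ) * Wt))) := by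
    rw [Matrix.neg_mul, Matrix.smul_mul, Matrix.mul_neg, Matrix.mul_smul]
  rw [this, Matrix.trace_neg, Matrix.trace_smul]
  have hcyc : Matrix.trace (Gᵀ * ((M - Mᵀ) * Wt)) = Matrix.trace (Mᵀ * (M - Mᵀ)) := by
    have hwg : Wt * Gᵀ = Mᵀ := by rw [hM, Matrix.transpose_mul, Matrix.transpose_transpose]
    rw [← Matrix.mul_assoc, Matrix.trace_mul_cycle, hwg]
  rw [hcyc, skew_inner]
  simp; ring

lemma trace_in_term (G Wt : Matrix (Fin m) (Fin n) ℝ) (η : ℝ) :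
    Matrix.trace (Gᵀ * (Wt * (-(η • (Wtᵀ * G - Gᵀ * Wt)))))
      = -(η/2) * frobNorm (Wtᵀ * G - Gᵀ * Wt)^2 := by
  set N := Wtᵀ * G with hN
  have hskew : Wtᵀ * G - Gᵀ * Wt = N - Nᵀ := by
    rw [hN, Matrix.transpose_mul, Matrix.transpose_transpose]
  rw [hskew]
  have : Gᵀ * (Wt * (-(η • (N - Nᵀ)))) = -(η • ((Gᵀ * Wt) * (N - Nᵀ))) := by
    rw [Matrix.mul_neg, Matrix.mul_smul, Matrix.mul_neg, Matrix.mul_smul, Matrix.mul_assoc]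
  rw [this, Matrix.trace_neg, Matrix.trace_smul]
  have hgn : Gᵀ * Wt = Nᵀ := by rw [hN, Matrix.transpose_mul, Matrix.transpose_transpose]
  rw [hgn, skew_inner]
  simp; ring

lemma expand_update (A : Matrix (Fin m) (Fin m) ℝ) (Wt : Matrix (Fin m) (Fin n) ℝ)
    (Bm : Matrix (Fin n) (Fin n) ℝ) :
    expTrunc2 A * Wt * expTrunc2 Bm - Wt =
      A * Wt + Wt * Bm +
        ((1/2 : ℝ) • ((A * A) * Wt) + (1/2 : ℝ) • (Wt * (Bm * Bm)) + A * (Wt * Bm) +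
          (1/2 : ℝ) • ((A * A) * (Wt * Bm)) + (1/2 : ℝ) • (A * (Wt * (Bm * Bm))) +
          (1/4 : ℝ) • ((A * A) * (Wt * (Bm * Bm)))) := by
  simp only [expTrunc2, Matrix.add_mul, Matrix.mul_add, Matrix.one_mul, Matrix.mul_one,
    Matrix.smul_mul, Matrix.mul_smul, smul_smul, Matrix.mul_assoc]
  norm_num [smul_smul]
  abel

lemma frob_six (x1 x2 x3 x4 x5 x6 : Matrix (Fin m) (Fin n) ℝ) :
    frobNorm (x1 + x2 + x3 + x4 + x5 + x6) ≤
      frobNorm x1 + frobNorm x2 + frobNorm x3 + frobNorm x4 + frobNorm x5 + frobNorm x6 := by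
  refine le_trans (frobNorm_add_le _ _) (add_le_add ?_ le_rfl)
  refine le_trans (frobNorm_add_le _ _) (add_le_add ?_ le_rfl)
  refine le_trans (frobNorm_add_le _ _) (add_le_add ?_ le_rfl)
  refine le_trans (frobNorm_add_le _ _) (add_le_add ?_ le_rfl)
  exact frobNorm_add_le _ _

end Aux

section OneStep
variable {m n : ℕ}


private lemma polyR (γ η B o i : ℝ) (hγ : 0 ≤ γ) (hη : 0 ≤ η) (ho0 : 0 ≤ o) (hi0 : 0 ≤ i)
    (hoB : o ≤ B) (hiB : i ≤ B) (hB : 0 ≤ B) :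
    (1/2) * (((η * o) * (η * o)) * γ) + (1/2) * (γ * ((η * i) * (η * i))) +
      (η * o) * (γ * (η * i)) + (1/2) * (((η * o) * (η * o)) * (γ * (η * i))) +
      (1/2) * ((η * o) * (γ * ((η * i) * (η * i)))) +
      (1/4) * (((η * o) * (η * o)) * (γ * ((η * i) * (η * i)))) ≤
    γ * (η ^ 2 + (B / 2) * η ^ 3 + (B ^ 2 / 8) * η ^ 4) * (i ^ 2 + o ^ 2) := by
  have e1 : o * i ≤ (o ^ 2 + i ^ 2) / 2 := by nlinarith [sq_nonneg (o - i)]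
  have m1 : γ * η ^ 2 * (o * i) ≤ γ * η ^ 2 * ((o ^ 2 + i ^ 2) / 2) :=
    mul_le_mul_of_nonneg_left e1 (by positivity)
  have e2 : o ^ 2 * i + o * i ^ 2 ≤ B * (o ^ 2 + i ^ 2) := by
    nlinarith [mul_le_mul_of_nonneg_right e1 (add_nonneg ho0 hi0),
      mul_le_mul_of_nonneg_left (add_le_add hoB hiB)
        (by positivity : (0:ℝ) ≤ (o ^ 2 + i ^ 2) / 2)]
  have e3 : o ^ 2 * i ^ 2 ≤ B ^ 2 * (o ^ 2 + i ^ 2) / 2 := by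
    nlinarith [mul_le_mul_of_nonneg_right (mul_le_mul hoB hiB hi0 hB) (mul_nonneg ho0 hi0),
      mul_le_mul_of_nonneg_left e1 (sq_nonneg B)]
  have m2 : γ * η ^ 3 / 2 * (o ^ 2 * i + o * i ^ 2) ≤ γ * η ^ 3 / 2 * (B * (o ^ 2 + i ^ 2)) :=
    mul_le_mul_of_nonneg_left e2 (by positivity)
  have m3 : γ * η ^ 4 / 4 * (o ^ 2 * i ^ 2) ≤ γ * η ^ 4 / 4 * (B ^ 2 * (o ^ 2 + i ^ 2) / 2) :=
    mul_le_mul_of_nonneg_left e3 (by positivity)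
  nlinarith [m1, m2, m3]

private lemma polyQ (L γ η B Kc o i x : ℝ) (hL : 0 ≤ L) (hγ : 0 ≤ γ) (hη : 0 ≤ η)
    (hKc0 : 0 ≤ Kc) (ho0 : 0 ≤ o) (hi0 : 0 ≤ i) (hoB : o ≤ B) (hiB : i ≤ B)
    (hx0 : 0 ≤ x) (hx : x ≤ γ * (η * o) + γ * (η * i) + Kc * (i ^ 2 + o ^ 2)) :
    (L/2) * x ^ 2 ≤ 2 * L * η ^ 2 * γ ^ 2 * (i ^ 2 + o ^ 2) +
      2 * L * Kc ^ 2 * B ^ 2 * (i ^ 2 + o ^ 2) := by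
  set S : ℝ := i ^ 2 + o ^ 2 with hS
  have hS0 : 0 ≤ S := by positivity
  have hS2B : S ≤ 2 * B ^ 2 := by nlinarith [hoB, hiB, ho0, hi0]
  have hx2 : x ^ 2 ≤ (γ * (η * o) + γ * (η * i) + Kc * S) ^ 2 :=
    pow_le_pow_left₀ hx0 hx 2
  have key : (γ * (η * o) + γ * (η * i) + Kc * S) ^ 2 ≤
      4 * γ ^ 2 * η ^ 2 * S + 4 * Kc ^ 2 * B ^ 2 * S := by
    nlinarith [sq_nonneg (γ * η * (o + i) - Kc * S),
      mul_nonneg (sq_nonneg (γ * η)) (sq_nonneg (o - i)),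
      mul_nonneg (mul_nonneg (sq_nonneg Kc) hS0) (sub_nonneg.2 hS2B)]
  have hq := mul_le_mul_of_nonneg_left (le_trans hx2 key) (by linarith : (0:ℝ) ≤ L / 2)
  linarith [hq]

set_option maxHeartbeats 2000000 in
lemma one_step (f : Matrix (Fin m) (Fin n) ℝ → ℝ)
    (G Wt : Matrix (Fin m) (Fin n) ℝ) (L η γ Ghat B : ℝ)
    (hs : ∀ Y, f Y ≤ f Wt + Matrix.trace (Gᵀ * (Y - Wt)) + (L/2) * frobNorm (Y - Wt) ^ 2)
    (hη : 0 < η) (hL : 0 ≤ L) (hγ : 0 ≤ γ) (hGhat : 0 ≤ Ghat) (hB : 0 ≤ B)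
    (hW : specNorm Wt ≤ γ) (hG : frobNorm G ≤ Ghat)
    (hi : frobNorm (Wtᵀ * G - Gᵀ * Wt) ≤ B) (ho : frobNorm (G * Wtᵀ - Wt * Gᵀ) ≤ B) :
    f (expTrunc2 (-(η • (G * Wtᵀ - Wt * Gᵀ))) * Wt * expTrunc2 (-(η • (Wtᵀ * G - Gᵀ * Wt))))
      ≤ f Wt -
        (η / 2 - Ghat * (γ * (η ^ 2 + (B / 2) * η ^ 3 + (B ^ 2 / 8) * η ^ 4)) -
          2 * L * η ^ 2 * γ ^ 2 -
          2 * L * (γ * (η ^ 2 + (B / 2) * η ^ 3 + (B ^ 2 / 8) * η ^ 4)) ^ 2 * B ^ 2) *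
        (frobNorm (Wtᵀ * G - Gᵀ * Wt) ^ 2 + frobNorm (G * Wtᵀ - Wt * Gᵀ) ^ 2) := by
  set A : Matrix (Fin m) (Fin m) ℝ := -(η • (G * Wtᵀ - Wt * Gᵀ)) with hA
  set Bm : Matrix (Fin n) (Fin n) ℝ := -(η • (Wtᵀ * G - Gᵀ * Wt)) with hBm
  set o : ℝ := frobNorm (G * Wtᵀ - Wt * Gᵀ) with hodef
  set i : ℝ := frobNorm (Wtᵀ * G - Gᵀ * Wt) with hidef
  set Kc : ℝ := γ * (η ^ 2 + (B / 2) * η ^ 3 + (B ^ 2 / 8) * η ^ 4) with hKc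
  have ho0 : 0 ≤ o := frobNorm_nonneg _
  have hi0 : 0 ≤ i := frobNorm_nonneg _
  have hKc0 : 0 ≤ Kc := by
    have : (0:ℝ) ≤ η ^ 2 + (B / 2) * η ^ 3 + (B ^ 2 / 8) * η ^ 4 := by positivity
    exact mul_nonneg hγ this
  -- Frobenius norms of A, Bm
  have hfA : frobNorm A = η * o := by
    rw [hA, frobNorm_neg, frobNorm_smul, abs_of_pos hη]
  have hfB : frobNorm Bm = η * i := by
    rw [hBm, frobNorm_neg, frobNorm_smul, abs_of_pos hη]
  have hsA : specNorm A ≤ η * o := hfA ▸ specNorm_le_frobNorm A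
  have hsB : specNorm Bm ≤ η * i := hfB ▸ specNorm_le_frobNorm Bm
  have hηo : 0 ≤ η * o := mul_nonneg hη.le ho0
  have hηi : 0 ≤ η * i := mul_nonneg hη.le hi0
  -- spectral bounds on products with Wt
  have hsWB : specNorm (Wt * Bm) ≤ γ * (η * i) :=
    le_trans (specNorm_mul_le _ _) (mul_le_mul hW hsB (specNorm_nonneg _) hγ)
  have hsWB2 : specNorm (Wt * (Bm * Bm)) ≤ γ * ((η * i) * (η * i)) := by
    refine le_trans (specNorm_mul_le _ _) (mul_le_mul hW ?_ (specNorm_nonneg _) hγ)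
    exact le_trans (specNorm_mul_le _ _) (mul_le_mul hsB hsB (specNorm_nonneg _) hηi)
  have hfA2 : frobNorm (A * A) ≤ (η * o) * (η * o) := by
    refine le_trans (frobNorm_mul_le _ _) ?_
    rw [hfA]
  -- bounds on remainder pieces
  have hr1 : frobNorm ((A * A) * Wt) ≤ ((η * o) * (η * o)) * γ :=
    le_trans (frob_mul_le_frob_spec _ _)
      (mul_le_mul hfA2 hW (specNorm_nonneg _) (by positivity))
  have hr2 : frobNorm (Wt * (Bm * Bm)) ≤ γ * ((η * i) * (η * i)) := by
    refine le_trans (frob_mul_le_spec_frob _ _) ?_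
    refine le_trans (mul_le_mul hW (le_trans (frobNorm_mul_le _ _) ?_)
      (frobNorm_nonneg _) hγ) le_rfl
    rw [hfB]
  have hr3 : frobNorm (A * (Wt * Bm)) ≤ (η * o) * (γ * (η * i)) := by
    refine le_trans (frob_mul_le_frob_spec _ _) ?_
    rw [hfA]; exact mul_le_mul le_rfl hsWB (specNorm_nonneg _) hηo
  have hr4 : frobNorm ((A * A) * (Wt * Bm)) ≤ ((η * o) * (η * o)) * (γ * (η * i)) := by
    refine le_trans (frob_mul_le_frob_spec _ _) ?_
    exact mul_le_mul hfA2 hsWB (specNorm_nonneg _) (by positivity)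
  have hr5 : frobNorm (A * (Wt * (Bm * Bm))) ≤ (η * o) * (γ * ((η * i) * (η * i))) := by
    refine le_trans (frob_mul_le_frob_spec _ _) ?_
    rw [hfA]; exact mul_le_mul le_rfl hsWB2 (specNorm_nonneg _) hηo
  have hr6 : frobNorm ((A * A) * (Wt * (Bm * Bm))) ≤
      ((η * o) * (η * o)) * (γ * ((η * i) * (η * i))) := by
    refine le_trans (frob_mul_le_frob_spec _ _) ?_
    exact mul_le_mul hfA2 hsWB2 (specNorm_nonneg _) (by positivity)
  -- the remainder
  set R : Matrix (Fin m) (Fin n) ℝ :=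
    (1/2 : ℝ) • ((A * A) * Wt) + (1/2 : ℝ) • (Wt * (Bm * Bm)) + A * (Wt * Bm) +
      (1/2 : ℝ) • ((A * A) * (Wt * Bm)) + (1/2 : ℝ) • (A * (Wt * (Bm * Bm))) +
      (1/4 : ℝ) • ((A * A) * (Wt * (Bm * Bm))) with hRdef
  have hfR : frobNorm R ≤ Kc * (i ^ 2 + o ^ 2) := by
    have h6 := frob_six ((1/2 : ℝ) • ((A * A) * Wt)) ((1/2 : ℝ) • (Wt * (Bm * Bm)))
      (A * (Wt * Bm)) ((1/2 : ℝ) • ((A * A) * (Wt * Bm))) ((1/2 : ℝ) • (A * (Wt * (Bm * Bm))))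
      ((1/4 : ℝ) • ((A * A) * (Wt * (Bm * Bm))))
    rw [← hRdef] at h6
    simp only [frobNorm_smul] at h6
    rw [show |(1/2 : ℝ)| = 1/2 by norm_num, show |(1/4 : ℝ)| = 1/4 by norm_num] at h6
    have hb : frobNorm R ≤
        (1/2) * (((η * o) * (η * o)) * γ) + (1/2) * (γ * ((η * i) * (η * i))) +
        (η * o) * (γ * (η * i)) + (1/2) * (((η * o) * (η * o)) * (γ * (η * i))) +
        (1/2) * ((η * o) * (γ * ((η * i) * (η * i)))) +
        (1/4) * (((η * o) * (η * o)) * (γ * ((η * i) * (η * i)))) := by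
      refine le_trans h6 ?_
      linarith [hr1, hr2, hr3, hr4, hr5, hr6]
    refine le_trans hb ?_
    rw [hKc]
    exact polyR γ η B o i hγ hη.le ho0 hi0 ho hi hB
  -- decomposition of the update
  have hΔ : expTrunc2 A * Wt * expTrunc2 Bm - Wt = A * Wt + Wt * Bm + R :=
    expand_update A Wt Bm
  set Wn : Matrix (Fin m) (Fin n) ℝ := expTrunc2 A * Wt * expTrunc2 Bm with hWn
  -- linear term
  have htr : Matrix.trace (Gᵀ * (Wn - Wt)) =
      -(η/2) * o ^ 2 + -(η/2) * i ^ 2 + Matrix.trace (Gᵀ * R) := by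
    rw [hΔ, trace_tm_add_right, trace_tm_add_right]
    rw [show Gᵀ * (A * Wt) = Gᵀ * (A * Wt) from rfl]
    have h1 : Matrix.trace (Gᵀ * (A * Wt)) = -(η/2) * o ^ 2 := by
      have := trace_out_term G Wt η
      rw [← Matrix.mul_assoc] at this ⊢
      rw [← hA] at this
      rw [this, hodef]
    have h2 : Matrix.trace (Gᵀ * (Wt * Bm)) = -(η/2) * i ^ 2 := by
      have := trace_in_term G Wt η
      rw [← hBm] at this
      rw [this, hidef]
    rw [h1, h2]
  have htrR : Matrix.trace (Gᵀ * R) ≤ Ghat * (Kc * (i ^ 2 + o ^ 2)) :=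
    le_trans (trace_le_frob_mul_frob G R)
      (mul_le_mul hG hfR (frobNorm_nonneg _) hGhat)
  -- quadratic term
  have hΔb : frobNorm (Wn - Wt) ≤ γ * (η * o) + γ * (η * i) + Kc * (i ^ 2 + o ^ 2) := by
    rw [hΔ]
    refine le_trans (frobNorm_add_le _ _) (add_le_add (le_trans (frobNorm_add_le _ _) ?_) hfR)
    have h1 : frobNorm (A * Wt) ≤ γ * (η * o) := by
      rw [mul_comm γ (η * o)]
      refine le_trans (frob_mul_le_frob_spec _ _) ?_
      rw [hfA]; exact mul_le_mul_of_nonneg_left hW hηo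
    have h2 : frobNorm (Wt * Bm) ≤ γ * (η * i) := by
      refine le_trans (frob_mul_le_spec_frob _ _) ?_
      rw [hfB]; exact mul_le_mul_of_nonneg_right hW hηi
    exact add_le_add h1 h2
  have hquad : (L/2) * frobNorm (Wn - Wt) ^ 2 ≤
      2 * L * η ^ 2 * γ ^ 2 * (i ^ 2 + o ^ 2) + 2 * L * Kc ^ 2 * B ^ 2 * (i ^ 2 + o ^ 2) :=
    polyQ L γ η B Kc o i _ hL hγ hη.le hKc0 ho0 hi0 ho hi (frobNorm_nonneg _) hΔb
  -- combine
  have hfin := hs Wn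
  have hlin : Matrix.trace (Gᵀ * (Wn - Wt)) ≤
      -(η/2) * (i ^ 2 + o ^ 2) + Ghat * (Kc * (i ^ 2 + o ^ 2)) := by
    rw [htr]; linarith
  linarith [hfin, hlin, hquad]

end OneStep

set_option maxHeartbeats 1000000 in
/-- Deterministic convergence of the simplified bilateral Pion update: under
`L`-smoothness, lower-boundedness, trajectory bounds and a positive one-step descent
coefficient `c`, for every `T ≥ 1` the minimum over `0 ≤ t < T` of the stationarity
measure `S_t = ‖G_t^in‖_F² + ‖G_t^out‖_F²` is at most `(f(W_0) - f_inf)/(c T)`. -/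
theorem pion_deterministic_convergence {m n : ℕ}
    (f : Matrix (Fin m) (Fin n) ℝ → ℝ)
    (gradf : Matrix (Fin m) (Fin n) ℝ → Matrix (Fin m) (Fin n) ℝ) (L : ℝ)
    (hgrad : ∀ A H : Matrix (Fin m) (Fin n) ℝ,
      HasDerivAt (fun s : ℝ => f (A + s • H)) (Matrix.trace ((gradf A)ᵀ * H)) 0)
    (hsmooth : ∀ A B : Matrix (Fin m) (Fin n) ℝ,
      f B ≤ f A + Matrix.trace ((gradf A)ᵀ * (B - A)) + (L / 2) * frobNorm (B - A) ^ 2)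
    (finf : ℝ) (hlb : ∀ A, finf ≤ f A)
    (η : ℝ) (hη : 0 < η)
    (W : ℕ → Matrix (Fin m) (Fin n) ℝ)
    (hupd : ∀ t, W (t + 1) =
      expTrunc2 (-(η • (gradf (W t) * (W t)ᵀ - W t * (gradf (W t))ᵀ))) * W t *
        expTrunc2 (-(η • ((W t)ᵀ * gradf (W t) - (gradf (W t))ᵀ * W t))))
    (γ Ghat B : ℝ)
    (hWb : ∀ t, specNorm (W t) ≤ γ)
    (hGb : ∀ t, frobNorm (gradf (W t)) ≤ Ghat)
    (hGinb : ∀ t, frobNorm ((W t)ᵀ * gradf (W t) - (gradf (W t))ᵀ * W t) ≤ B)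
    (hGoutb : ∀ t, frobNorm (gradf (W t) * (W t)ᵀ - W t * (gradf (W t))ᵀ) ≤ B)
    (hc : 0 < η / 2 -
        Ghat * (γ * (η ^ 2 + (B / 2) * η ^ 3 + (B ^ 2 / 8) * η ^ 4)) -
        2 * L * η ^ 2 * γ ^ 2 -
        2 * L * (γ * (η ^ 2 + (B / 2) * η ^ 3 + (B ^ 2 / 8) * η ^ 4)) ^ 2 * B ^ 2) :
    ∀ T : ℕ, 1 ≤ T → ∃ t < T,
      frobNorm ((W t)ᵀ * gradf (W t) - (gradf (W t))ᵀ * W t) ^ 2 +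
          frobNorm (gradf (W t) * (W t)ᵀ - W t * (gradf (W t))ᵀ) ^ 2 ≤
        (f (W 0) - finf) /
          ((η / 2 -
              Ghat * (γ * (η ^ 2 + (B / 2) * η ^ 3 + (B ^ 2 / 8) * η ^ 4)) -
              2 * L * η ^ 2 * γ ^ 2 -
              2 * L * (γ * (η ^ 2 + (B / 2) * η ^ 3 + (B ^ 2 / 8) * η ^ 4)) ^ 2 * B ^ 2) *
            T) := by
  intro T hT
  set c : ℝ := η / 2 -
      Ghat * (γ * (η ^ 2 + (B / 2) * η ^ 3 + (B ^ 2 / 8) * η ^ 4)) -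
      2 * L * η ^ 2 * γ ^ 2 -
      2 * L * (γ * (η ^ 2 + (B / 2) * η ^ 3 + (B ^ 2 / 8) * η ^ 4)) ^ 2 * B ^ 2 with hcdef
  set S : ℕ → ℝ := fun t =>
    frobNorm ((W t)ᵀ * gradf (W t) - (gradf (W t))ᵀ * W t) ^ 2 +
      frobNorm (gradf (W t) * (W t)ᵀ - W t * (gradf (W t))ᵀ) ^ 2 with hSdef
  have hTpos : (0:ℝ) < T := by exact_mod_cast hT
  have hnum : 0 ≤ f (W 0) - finf := sub_nonneg.2 (hlb _)
  have hRHS : 0 ≤ (f (W 0) - finf) / (c * T) := div_nonneg hnum (mul_nonneg hc.le hTpos.le)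
  -- degenerate case
  rcases Nat.eq_zero_or_pos m with hm | hm
  · subst hm
    refine ⟨0, hT, ?_⟩
    have h1 : frobNorm ((W 0)ᵀ * gradf (W 0) - (gradf (W 0))ᵀ * W 0) = 0 := by
      rw [frobNorm_eq]
      have : ∀ i j, ((W 0)ᵀ * gradf (W 0) - (gradf (W 0))ᵀ * W 0) i j = 0 := by
        intro i j; simp [Matrix.sub_apply, Matrix.mul_apply]
      simp [this]
    have h2 : frobNorm (gradf (W 0) * (W 0)ᵀ - W 0 * (gradf (W 0))ᵀ) = 0 := by
      rw [frobNorm_eq]; simp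
    rw [h1, h2]; simpa using hRHS
  rcases Nat.eq_zero_or_pos n with hn | hn
  · subst hn
    refine ⟨0, hT, ?_⟩
    have h1 : frobNorm ((W 0)ᵀ * gradf (W 0) - (gradf (W 0))ᵀ * W 0) = 0 := by
      rw [frobNorm_eq]; simp
    have h2 : frobNorm (gradf (W 0) * (W 0)ᵀ - W 0 * (gradf (W 0))ᵀ) = 0 := by
      rw [frobNorm_eq]
      have : ∀ i j, (gradf (W 0) * (W 0)ᵀ - W 0 * (gradf (W 0))ᵀ) i j = 0 := by
        intro i j; simp [Matrix.sub_apply, Matrix.mul_apply]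
      simp [this]
    rw [h1, h2]; simpa using hRHS
  -- nondegenerate: derive 0 ≤ L
  have hL : 0 ≤ L := by
    by_contra hLneg
    push_neg at hLneg
    set H : Matrix (Fin m) (Fin n) ℝ := Matrix.single ⟨0, hm⟩ ⟨0, hn⟩ (1:ℝ) with hH
    have hHfrob : frobNorm H ^ 2 = 1 := by
      rw [frobNorm_sq, hH]
      rw [Finset.sum_eq_single (⟨0, hm⟩ : Fin m)]
      · rw [Finset.sum_eq_single (⟨0, hn⟩ : Fin n)]
        · simp [hH, Matrix.single]
        · intro b _ hb; simp [hH, Matrix.single, (Ne.symm hb)]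
        · intro h; exact absurd (Finset.mem_univ _) h
      · intro b _ hb
        apply Finset.sum_eq_zero
        intro j _
        simp [hH, Matrix.single, (Ne.symm hb)]
      · intro h; exact absurd (Finset.mem_univ _) h
    have hbound : ∀ s : ℝ, 2 * finf ≤ 2 * f 0 + L * s ^ 2 := by
      intro s
      have e1 := hsmooth 0 (s • H)
      have e2 := hsmooth 0 (-(s • H))
      have hfr1 : frobNorm (s • H - 0) ^ 2 = s ^ 2 := by
        rw [sub_zero, frobNorm_smul, mul_pow, sq_abs, hHfrob, mul_one]
      have hfr2 : frobNorm (-(s • H) - 0) ^ 2 = s ^ 2 := by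
        rw [sub_zero, frobNorm_neg, frobNorm_smul, mul_pow, sq_abs, hHfrob, mul_one]
      have htr1 : Matrix.trace ((gradf 0)ᵀ * (s • H - 0)) =
          s * Matrix.trace ((gradf 0)ᵀ * H) := by
        rw [sub_zero, Matrix.mul_smul, Matrix.trace_smul]; simp
      have htr2 : Matrix.trace ((gradf 0)ᵀ * (-(s • H) - 0)) =
          -(s * Matrix.trace ((gradf 0)ᵀ * H)) := by
        rw [sub_zero, Matrix.mul_neg, Matrix.mul_smul, Matrix.trace_neg, Matrix.trace_smul]
        simp
      rw [hfr1, htr1] at e1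
      rw [hfr2, htr2] at e2
      have l1 := hlb (s • H)
      have l2 := hlb (-(s • H))
      linarith
    set s0 : ℝ := Real.sqrt ((2 * f 0 - 2 * finf + 1) / (-L)) with hs0
    have hargpos : 0 < (2 * f 0 - 2 * finf + 1) / (-L) := by
      have := hlb 0
      apply div_pos (by linarith) (by linarith)
    have hs0sq : s0 ^ 2 = (2 * f 0 - 2 * finf + 1) / (-L) := Real.sq_sqrt hargpos.le
    have := hbound s0
    rw [hs0sq] at this
    have hLne : L ≠ 0 := ne_of_lt hLneg
    have hLs : L * ((2 * f 0 - 2 * finf + 1) / (-L)) = -(2 * f 0 - 2 * finf + 1) := by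
      field_simp
    rw [hLs] at this
    linarith
  -- nonnegativity of constants
  have hγ0 : 0 ≤ γ := le_trans (specNorm_nonneg _) (hWb 0)
  have hGhat0 : 0 ≤ Ghat := le_trans (frobNorm_nonneg _) (hGb 0)
  have hB0 : 0 ≤ B := le_trans (frobNorm_nonneg _) (hGinb 0)
  -- one-step descent
  have hstep : ∀ t, c * S t ≤ f (W t) - f (W (t + 1)) := by
    intro t
    have h := one_step f (gradf (W t)) (W t) L η γ Ghat B
      (fun Y => hsmooth (W t) Y) hη hL hγ0 hGhat0 hB0 (hWb t) (hGb t) (hGinb t) (hGoutb t)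
    rw [← hupd t] at h
    rw [hcdef]
    simp only [hSdef]
    linarith [h]
  -- telescoping
  have hsum : c * ∑ t ∈ Finset.range T, S t ≤ f (W 0) - finf := by
    rw [Finset.mul_sum]
    calc ∑ t ∈ Finset.range T, c * S t
        ≤ ∑ t ∈ Finset.range T, (f (W t) - f (W (t + 1))) :=
          Finset.sum_le_sum fun t _ => hstep t
      _ = f (W 0) - f (W T) := Finset.sum_range_sub' (fun t => f (W t)) T
      _ ≤ f (W 0) - finf := by linarith [hlb (W T)]
  -- minimum
  obtain ⟨t0, ht0mem, ht0min⟩ := Finset.exists_min_image (Finset.range T) S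
    ⟨0, Finset.mem_range.2 hT⟩
  refine ⟨t0, Finset.mem_range.1 ht0mem, ?_⟩
  have hcard : (T:ℝ) * S t0 ≤ ∑ t ∈ Finset.range T, S t := by
    calc (T:ℝ) * S t0 = ∑ _t ∈ Finset.range T, S t0 := by
          rw [Finset.sum_const, Finset.card_range, nsmul_eq_mul]
      _ ≤ ∑ t ∈ Finset.range T, S t := Finset.sum_le_sum fun t ht => ht0min t ht
  rw [show (frobNorm ((W t0)ᵀ * gradf (W t0) - (gradf (W t0))ᵀ * W t0) ^ 2 +
      frobNorm (gradf (W t0) * (W t0)ᵀ - W t0 * (gradf (W t0))ᵀ) ^ 2) = S t0 from rfl]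
  rw [le_div_iff₀ (by positivity)]
  have := mul_le_mul_of_nonneg_left hcard hc.le
  calc S t0 * (c * T) = c * ((T:ℝ) * S t0) := by ring
    _ ≤ c * ∑ t ∈ Finset.range T, S t := this
    _ ≤ f (W 0) - finf := hsum
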